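/- In the affine Schur algebra S△(2,2) over ℚ at q = 1 with λ = (2,0), the quotient S△(2,2)/(S△(2,2) e_λ S△(2,2)) is isomorphic as a ℚ-algebra to the Laurent polynomial ring ℚ[x, x⁻¹]. -/

import Mathlib

noncomputable section

/-- The row vector `row(A) = (Σ_j a_{i,j})_i` of a `ℤ×ℤ` matrix with entries in `ℕ`. -/
def rowS (A : ℤ → ℤ → ℕ) (i : ℤ) : ℕ := ∑ᶠ j, A i j

/-- The column vector `col(A) = (Σ_i a_{i,j})_j`. -/
def colS (A : ℤ → ℤ → ℕ) (j : ℤ) : ℕ := ∑ᶠ i, A i j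

/-- `Θ△(n,r)`: the set of `ℤ×ℤ` matrices over `ℕ` with `a_{i,j} = a_{i+n,j+n}`, finitely
many nonzero entries in each row and column, and total entry sum `r` over `n` consecutive
rows (equivalently columns). -/
def ThetaAff (n r : ℕ) : Set (ℤ → ℤ → ℕ) :=
  {A | (∀ i j, A (i + n) (j + n) = A i j) ∧
       (∀ i, (Function.support (A i)).Finite) ∧
       (∀ j, (Function.support fun i => A i j).Finite) ∧
       (∑ i ∈ Finset.Icc (1 : ℤ) (n : ℤ), rowS A i) = r ∧
       (∑ j ∈ Finset.Icc (1 : ℤ) (n : ℤ), colS A j) = r}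

/-- `Λ△(n,r)`: `n`-periodic sequences of natural numbers summing to `r` over a period. -/
def LambdaAff (n r : ℕ) : Set (ℤ → ℕ) :=
  {l | (∀ i, l (i + n) = l i) ∧ (∑ i ∈ Finset.Icc (1 : ℤ) (n : ℤ), l i) = r}

/-- The diagonal matrix `diag(λ)` attached to `λ ∈ Λ△(n,r)`. -/
def diagM (l : ℤ → ℕ) : ℤ → ℤ → ℕ := fun i j => if i = j then l i else 0

/-- The `n`-periodic elementary matrix `E△_{i,j}`, with `1` at the positions
`(i + sn, j + sn)`, `s ∈ ℤ`. -/
def Edel (n : ℕ) (i j : ℤ) : ℤ → ℤ → ℕ :=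
  fun x y => if x - i = y - j ∧ (n : ℤ) ∣ (x - i) then 1 else 0

/-- `Λ(∞, m)`: finitely supported sequences `t : ℤ → ℕ` with `Σ t = m`. -/
def CompInf (m : ℕ) : Set (ℤ → ℕ) :=
  {t | (Function.support t).Finite ∧ ∑ᶠ u, t u = m}

/-- `A + Σ_u t_u (E△_{h,u} - E△_{h+1,u})`. -/
def rowAdd (n : ℕ) (h : ℤ) (t : ℤ → ℕ) (A : ℤ → ℤ → ℕ) : ℤ → ℤ → ℕ :=
  fun x y => A x y + (if (n : ℤ) ∣ (x - h) then t (y - x + h) else 0)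
               - (if (n : ℤ) ∣ (x - (h + 1)) then t (y - x + (h + 1)) else 0)

/-- `A - Σ_u t_u (E△_{h,u} - E△_{h+1,u})`. -/
def rowSub (n : ℕ) (h : ℤ) (t : ℤ → ℕ) (A : ℤ → ℤ → ℕ) : ℤ → ℤ → ℕ :=
  fun x y => A x y + (if (n : ℤ) ∣ (x - (h + 1)) then t (y - x + (h + 1)) else 0)
               - (if (n : ℤ) ∣ (x - h) then t (y - x + h) else 0)

/-- `A + Σ_u t_u (E△_{u,h+1} - E△_{u,h})`. -/
def colAdd (n : ℕ) (h : ℤ) (t : ℤ → ℕ) (A : ℤ → ℤ → ℕ) : ℤ → ℤ → ℕ :=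
  fun x y => A x y + (if (n : ℤ) ∣ (y - (h + 1)) then t (x - y + (h + 1)) else 0)
               - (if (n : ℤ) ∣ (y - h) then t (x - y + h) else 0)

/-- `A - Σ_u t_u (E△_{u,h+1} - E△_{u,h})`. -/
def colSub (n : ℕ) (h : ℤ) (t : ℤ → ℕ) (A : ℤ → ℤ → ℕ) : ℤ → ℤ → ℕ :=
  fun x y => A x y + (if (n : ℤ) ∣ (y - h) then t (x - y + h) else 0)
               - (if (n : ℤ) ∣ (y - (h + 1)) then t (x - y + (h + 1)) else 0)

/-- An algebra `S` realizing the affine Schur algebra `S△(n,r)` over `ℚ` at `q = 1`: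
it has a basis `{e_A : A ∈ Θ△(n,r)}` whose structure constants vanish unless
`col(A) = row(A')`, diagonal basis elements act as partial identities, and the transpose
of matrices induces an involutory anti-automorphism `τ`. -/
structure AffineSchurAlg (n r : ℕ) (S : Type) [Ring S] [Algebra ℚ S] where
  /-- the basis elements `e_A` (extended by `0` off `Θ△(n,r)`) -/
  e : (ℤ → ℤ → ℕ) → S
  indep : LinearIndependent ℚ (fun A : ThetaAff n r => e A.1)
  span_eq_top : Submodule.span ℚ (e '' ThetaAff n r) = ⊤
  vanish : ∀ A, A ∉ ThetaAff n r → e A = 0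
  mul_disjoint : ∀ A B, A ∈ ThetaAff n r → B ∈ ThetaAff n r →
    colS A ≠ rowS B → e A * e B = 0
  diag_row : ∀ A ∈ ThetaAff n r, e (diagM (rowS A)) * e A = e A
  diag_col : ∀ A ∈ ThetaAff n r, e A * e (diagM (colS A)) = e A
  /-- the anti-involution `e_A ↦ e_{Aᵀ}` -/
  tau : S →ₗ[ℚ] S
  tau_mul : ∀ a b : S, tau (a * b) = tau b * tau a
  tau_invol : ∀ a : S, tau (tau a) = a
  tau_e : ∀ A, tau (e A) = e (fun x y => A y x)

/-- An algebra realizing the affine Schur algebra `S△(2,2)` over `ℚ` at `q = 1`,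
together with the multiplication formulas of Lusztig and of Du–Deng–Fu
(Propositions 2.5, 2.6, 2.7 of the paper, for `n = 2`), and the shift formulas
(multiplication by `e_{2E△_{1,3}}` and `e_{2E△_{3,1}}`) coming from the Hecke-algebra
description. -/
structure AffineSchur22 (S : Type) [Ring S] [Algebra ℚ S] extends
    AffineSchurAlg 2 2 S where
  /-- Proposition 2.5(1): multiplication by `e_{B_m}`,
  `B_m = diag(λ) + m E△_{h,h+1} - m E△_{h+1,h+1}`, `λ = row(A)`. -/
  lusztig_row_plus : ∀ (h : ℤ) (m : ℕ), ∀ A ∈ ThetaAff 2 2, m ≤ rowS A (h + 1) →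
    e (fun x y => diagM (rowS A) x y + m * Edel 2 h (h + 1) x y
        - m * Edel 2 (h + 1) (h + 1) x y) * e A
      = ∑ᶠ t ∈ {t | t ∈ CompInf m ∧ ∀ u, t u ≤ A (h + 1) u},
          ((∏ᶠ u, Nat.choose (A h u + t u) (t u) : ℕ) : ℚ) • e (rowAdd 2 h t A)
  /-- Proposition 2.5(2): multiplication by `e_{C_m}`,
  `C_m = diag(λ) - m E△_{h,h} + m E△_{h+1,h}`, `λ = row(A)`. -/
  lusztig_row_minus : ∀ (h : ℤ) (m : ℕ), ∀ A ∈ ThetaAff 2 2, m ≤ rowS A h →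
    e (fun x y => diagM (rowS A) x y - m * Edel 2 h h x y
        + m * Edel 2 (h + 1) h x y) * e A
      = ∑ᶠ t ∈ {t | t ∈ CompInf m ∧ ∀ u, t u ≤ A h u},
          ((∏ᶠ u, Nat.choose (A (h + 1) u + t u) (t u) : ℕ) : ℚ) • e (rowSub 2 h t A)
  /-- Proposition 2.6(1): right multiplication by `e_{B_m}`,
  `B_m = diag(λ) + m E△_{h,h+1} - m E△_{h,h}`, `λ = col(A)`. -/
  lusztig_col_plus : ∀ (h : ℤ) (m : ℕ), ∀ A ∈ ThetaAff 2 2, m ≤ colS A h →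
    e A * e (fun x y => diagM (colS A) x y + m * Edel 2 h (h + 1) x y
        - m * Edel 2 h h x y)
      = ∑ᶠ t ∈ {t | t ∈ CompInf m ∧ ∀ u, t u ≤ A u h},
          ((∏ᶠ u, Nat.choose (A u (h + 1) + t u) (t u) : ℕ) : ℚ) • e (colAdd 2 h t A)
  /-- Proposition 2.6(2): right multiplication by `e_{C_m}`,
  `C_m = diag(λ) - m E△_{h+1,h+1} + m E△_{h+1,h}`, `λ = col(A)`. -/
  lusztig_col_minus : ∀ (h : ℤ) (m : ℕ), ∀ A ∈ ThetaAff 2 2, m ≤ colS A (h + 1) →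
    e A * e (fun x y => diagM (colS A) x y - m * Edel 2 (h + 1) (h + 1) x y
        + m * Edel 2 (h + 1) h x y)
      = ∑ᶠ t ∈ {t | t ∈ CompInf m ∧ ∀ u, t u ≤ A u (h + 1)},
          ((∏ᶠ u, Nat.choose (A u h + t u) (t u) : ℕ) : ℚ) • e (colSub 2 h t A)
  /-- Proposition 2.7: multiplication by `e_{D_m}`,
  `D_m = diag(λ) - E△_{h,h} + E△_{h,h+mn}`, `λ = row(A)`, `m ≠ 0`. -/
  lusztig_shift : ∀ (h : ℤ) (m : ℤ), m ≠ 0 → ∀ A ∈ ThetaAff 2 2, 1 ≤ rowS A h →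
    e (fun x y => diagM (rowS A) x y - Edel 2 h h x y + Edel 2 h (h + 2 * m) x y) * e A
      = ∑ᶠ u ∈ {u : ℤ | 1 ≤ A h u},
          ((A h (u + 2 * m) + 1 : ℕ) : ℚ) •
            e (fun x y => A x y + Edel 2 h (u + 2 * m) x y - Edel 2 h u x y)
  /-- multiplication by `e_{2E△_{1,3}}` shifts both column indices by `2`
  (Proposition 2.8 of the paper). -/
  x2_shift : ∀ i j : ℤ,
    e (fun x y => 2 * Edel 2 1 3 x y) * e (fun x y => Edel 2 1 i x y + Edel 2 1 j x y)
      = e (fun x y => Edel 2 1 (i + 2) x y + Edel 2 1 (j + 2) x y)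
  /-- multiplication by `e_{2E△_{3,1}}` shifts both column indices by `-2`. -/
  x2inv_shift : ∀ i j : ℤ,
    e (fun x y => 2 * Edel 2 3 1 x y) * e (fun x y => Edel 2 1 i x y + Edel 2 1 j x y)
      = e (fun x y => Edel 2 1 (i - 2) x y + Edel 2 1 (j - 2) x y)

/-- The weight `λ = (2,0) ∈ Λ△(2,2)`. -/
def lam0 : ℤ → ℕ := fun i => if (2 : ℤ) ∣ (i - 1) then 2 else 0

/-- The weight `μ = (0,2) ∈ Λ△(2,2)`. -/
def mu0 : ℤ → ℕ := fun i => if (2 : ℤ) ∣ (i - 2) then 2 else 0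

/-- The weight `ν = (1,1) ∈ Λ△(2,2)`. -/
def nu0 : ℤ → ℕ := fun _ => 1

/-- The matrix `E△_{i,j} + E△_{k,l}` (for `n = 2`). -/
def Mat2 (i j k l : ℤ) : ℤ → ℤ → ℕ := fun x y => Edel 2 i j x y + Edel 2 k l x y

/-!
Every basis element `e_A` of `S△(2,2)` has row and column weights among `λ = (2,0)`, `μ = (0,2)`,
`ν = (1,1)`. If one of them is `λ` or `μ` then `e_A` lies in the ideal `I = S e_λ S`, since
`e_μ = e_{2E₂₁} e_λ e_{2E₁₂}`. The remaining basis elements are `e(a, b) = e_{E₁ₐ + E₂ᵦ}` with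
`a + b` odd. Lusztig's formulas for `m = 1` give `e(a, b) + e(a + 1, b - 1) ∈ I`, so modulo `I`
every `e(a, b)` equals `±e(1 + 2k, 2)` with `k = (a + b - 3) / 2`, and by the shift formula
(Proposition 2.7) these normal forms multiply like the monomials `T^k`.

Hence `π : e(a, b) ↦ (-1)^b T^k`, zero on all other basis elements, is a linear retraction of
`φ : T^k ↦ e(1 + 2k, 2)` with `x - φ (π x) ∈ I` for all `x`. Conversely `π` kills `I`: this comes
down to `π (e_A e_B) = 0` for `A` of weights `(ν, λ)` and `B` of weights `(λ, ν)`, and factoring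
`e_B = e_{E₁₁ + E₁₂} e(c, d)` turns that product into `(e(a + 1, b) + e(a, b + 1)) e(c, d)`, whose
two terms cancel under `π`. Multiplicativity of `π` follows, as `x y ≡ φ (π x) φ (π y)` modulo `I`.
-/

open Function

section FinsumNat

variable {α : Type*}

theorem eq_zero_of_finsum_eq_zero {f : α → ℕ} (hf : (support f).Finite)
    (h : ∑ᶠ u, f u = 0) : f = 0 := by
  funext u
  have := single_le_finsum u hf fun _ => Nat.zero_le _
  simp only [Pi.zero_apply]
  omega

variable [DecidableEq α]

theorem finsum_piSingle {M : Type*} [AddCommMonoid M] (a : α) (m : M) :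
    ∑ᶠ u, (Pi.single a m : α → M) u = m := by
  rw [finsum_eq_single _ a fun u hu => by simp [hu], Pi.single_eq_same]

theorem exists_eq_add_single_of_finsum_eq_succ {f : α → ℕ} (hf : (support f).Finite) {n : ℕ}
    (h : ∑ᶠ u, f u = n + 1) :
    ∃ a, ∃ g : α → ℕ, (support g).Finite ∧ ∑ᶠ u, g u = n ∧ f = g + Pi.single a 1 := by
  obtain ⟨a, ha⟩ : ∃ a, f a ≠ 0 := by
    by_contra! h0
    rw [finsum_eq_zero_of_forall_eq_zero h0] at h
    omega
  set g : α → ℕ := f - Pi.single a 1 with hg_def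
  have hfg : f = g + Pi.single a 1 := by
    funext u
    by_cases hu : u = a
    · subst hu; simp only [hg_def, Pi.add_apply, Pi.sub_apply, Pi.single_eq_same]; omega
    · simp [hg_def, hu]
  have hg : (support g).Finite :=
    hf.subset fun u hu => by simp only [hg_def, mem_support, Pi.sub_apply] at hu ⊢; omega
  have hsingle : (support (Pi.single a 1 : α → ℕ)).Finite :=
    (Set.finite_singleton a).subset Pi.support_single_subset
  refine ⟨a, g, hg, ?_, hfg⟩
  have hs : ∑ᶠ u, f u = ∑ᶠ u, g u + ∑ᶠ u, (Pi.single a 1 : α → ℕ) u := by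
    conv_lhs => rw [hfg]
    exact finsum_add_distrib hg hsingle
  rw [h, finsum_piSingle] at hs
  omega

theorem exists_eq_single_of_finsum_eq_one {f : α → ℕ} (hf : (support f).Finite)
    (h : ∑ᶠ u, f u = 1) : ∃ a, f = Pi.single a 1 := by
  obtain ⟨a, g, hg, hsum, rfl⟩ := exists_eq_add_single_of_finsum_eq_succ hf h
  exact ⟨a, by rw [eq_zero_of_finsum_eq_zero hg hsum, zero_add]⟩

theorem exists_eq_single_add_single_of_finsum_eq_two {f : α → ℕ} (hf : (support f).Finite)
    (h : ∑ᶠ u, f u = 2) : ∃ a b, f = Pi.single a 1 + Pi.single b 1 := by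
  obtain ⟨b, g, hg, hsum, rfl⟩ := exists_eq_add_single_of_finsum_eq_succ hf h
  obtain ⟨a, rfl⟩ := exists_eq_single_of_finsum_eq_one hg hsum
  exact ⟨a, b, rfl⟩

theorem piSingle_left_injective {M : Type*} [Zero M] {m : M} (hm : m ≠ 0) :
    Injective fun a : α => (Pi.single a m : α → M) := by
  intro a b hab
  by_contra hne
  simpa [hne, hm] using congrFun hab a

theorem finprod_choose_add_piSingle (f : α → ℕ) (p : α) (m : ℕ) :
    ∏ᶠ u, Nat.choose (f u + (Pi.single p m : α → ℕ) u) ((Pi.single p m : α → ℕ) u)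
      = Nat.choose (f p + m) m := by
  rw [finprod_eq_single _ p fun u hu => by simp [hu], Pi.single_eq_same]

end FinsumNat

theorem AddSubgroup.sub_mem_of_forall_add_one_sub_mem {G : Type*} [AddCommGroup G]
    (p : AddSubgroup G) {g : ℤ → G} (h : ∀ j, g (j + 1) - g j ∈ p) (j : ℤ) : g j - g 0 ∈ p := by
  induction j using Int.induction_on with
  | zero => simp
  | succ j ih => simpa using p.add_mem (h j) ih
  | pred j ih =>
    convert p.sub_mem ih (h (-j - 1)) using 1
    rw [sub_add_cancel]
    abel

theorem neg_one_zpow_eq_of_two_dvd_sub {m n : ℤ} (h : (2 : ℤ) ∣ m - n) :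
    (-1 : ℚ) ^ m = (-1 : ℚ) ^ n := by
  rw [← sub_add_cancel m n, zpow_add₀ (by norm_num), Even.neg_one_zpow (even_iff_two_dvd.mpr h),
    one_mul]

theorem sum_Icc_one_two {M : Type*} [AddCommMonoid M] (f : ℤ → M) :
    ∑ i ∈ Finset.Icc (1 : ℤ) ((2 : ℕ) : ℤ), f i = f 1 + f 2 := by
  rw [show Finset.Icc (1 : ℤ) ((2 : ℕ) : ℤ) = {1, 2} by decide, Finset.sum_pair (by decide)]

theorem setOf_mem_compInf_one_le (g : ℤ → ℕ) :
    {t | t ∈ CompInf 1 ∧ ∀ u, t u ≤ g u} = (fun p => Pi.single p 1) '' support g := by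
  ext t
  constructor
  · rintro ⟨⟨ht, hsum⟩, hle⟩
    obtain ⟨p, rfl⟩ := exists_eq_single_of_finsum_eq_one ht hsum
    refine ⟨p, ?_, rfl⟩
    have := hle p
    simp only [Pi.single_eq_same] at this
    exact Nat.one_le_iff_ne_zero.mp this
  · rintro ⟨p, hp, rfl⟩
    refine ⟨⟨(Set.finite_singleton p).subset Pi.support_single_subset, finsum_piSingle p 1⟩,
      fun u => ?_⟩
    by_cases hu : u = p
    · subst hu; simpa [Nat.one_le_iff_ne_zero] using hp
    · simp [hu]

theorem finsum_mem_compInf_one_le {M : Type*} [AddCommMonoid M] (g : ℤ → ℕ)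
    (F : (ℤ → ℕ) → M) :
    ∑ᶠ t ∈ {t | t ∈ CompInf 1 ∧ ∀ u, t u ≤ g u}, F t = ∑ᶠ p ∈ support g, F (Pi.single p 1) := by
  rw [setOf_mem_compInf_one_le, finsum_mem_image (piSingle_left_injective one_ne_zero).injOn]

theorem setOf_mem_compInf_le_single (p : ℤ) (m : ℕ) :
    {t | t ∈ CompInf m ∧ ∀ u, t u ≤ (Pi.single p m : ℤ → ℕ) u} = {Pi.single p m} := by
  ext t
  constructor
  · rintro ⟨⟨-, hsum⟩, hle⟩
    have hzero : ∀ u, u ≠ p → t u = 0 := fun u hu => by simpa [hu] using hle u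
    rw [finsum_eq_single _ p hzero] at hsum
    funext u
    by_cases hu : u = p
    · subst hu; simpa using hsum
    · simp [hu, hzero u hu]
  · rintro rfl
    exact ⟨⟨(Set.finite_singleton p).subset Pi.support_single_subset, finsum_piSingle p m⟩,
      fun u => le_rfl⟩

section ThetaAff

variable {n r : ℕ} {A : ℤ → ℤ → ℕ}

theorem ThetaAff.apply_add_mul (hA : A ∈ ThetaAff n r) (k i j : ℤ) :
    A (i + k * n) (j + k * n) = A i j := by
  have hper : Periodic (fun x => A x (x + (j - i))) n := fun x => by
    simpa only [add_right_comm x (n : ℤ)] using hA.1 x (x + (j - i))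
  have := hper.int_mul k i
  simp only [Int.cast_id] at this
  rwa [show i + k * n + (j - i) = j + k * n by ring, show i + (j - i) = j by ring] at this

theorem ThetaAff.ext_of_rows {r' : ℕ} {B : ℤ → ℤ → ℕ} (hn : 0 < n) (hA : A ∈ ThetaAff n r)
    (hB : B ∈ ThetaAff n r') (h : ∀ i ∈ Finset.Icc (1 : ℤ) n, A i = B i) : A = B := by
  funext x y
  have hx : x = ((x - 1) % n + 1) + (x - 1) / n * n := by
    have := Int.emod_add_mul_ediv (x - 1) (n : ℤ)
    linarith
  have hi : (x - 1) % n + 1 ∈ Finset.Icc (1 : ℤ) n := by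
    have h0 := Int.emod_nonneg (x - 1) (by omega : (n : ℤ) ≠ 0)
    have h1 := Int.emod_lt_of_pos (x - 1) (by omega : (0 : ℤ) < n)
    simp only [Finset.mem_Icc]
    omega
  rw [hx, ← sub_add_cancel y ((x - 1) / n * n), ThetaAff.apply_add_mul hA,
    ThetaAff.apply_add_mul hB, h _ hi]

theorem ThetaAff.rowS_periodic (hA : A ∈ ThetaAff n r) : Periodic (rowS A) n := fun i => by
  unfold rowS
  rw [← finsum_comp_equiv (Equiv.addRight (n : ℤ))]
  exact finsum_congr fun j => hA.1 i j

theorem ThetaAff.colS_periodic (hA : A ∈ ThetaAff n r) : Periodic (colS A) n := fun j => by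
  unfold colS
  rw [← finsum_comp_equiv (Equiv.addRight (n : ℤ))]
  exact finsum_congr fun i => hA.1 i j

theorem ThetaAff.rowS_mem (hA : A ∈ ThetaAff n r) : rowS A ∈ LambdaAff n r :=
  ⟨ThetaAff.rowS_periodic hA, hA.2.2.2.1⟩

theorem ThetaAff.colS_mem (hA : A ∈ ThetaAff n r) : colS A ∈ LambdaAff n r :=
  ⟨ThetaAff.colS_periodic hA, hA.2.2.2.2⟩

theorem rowS_diagM (l : ℤ → ℕ) : rowS (diagM l) = l :=
  funext fun i => (finsum_eq_single _ i fun _ hj => if_neg (Ne.symm hj)).trans (if_pos rfl)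

theorem colS_diagM (l : ℤ → ℕ) : colS (diagM l) = l :=
  funext fun j => (finsum_eq_single _ j fun _ hi => if_neg hi).trans (if_pos rfl)

theorem diagM_mem_thetaAff {l : ℤ → ℕ} (hl : l ∈ LambdaAff n r) : diagM l ∈ ThetaAff n r := by
  have hsupp (i : ℤ) : (support fun j => diagM l i j).Finite :=
    (Set.finite_singleton i).subset fun j hj => by
      by_contra hne
      exact hj (if_neg (Ne.symm hne))
  refine ⟨fun i j => ?_, hsupp, fun j => ?_, by rw [rowS_diagM]; exact hl.2,
    by rw [colS_diagM]; exact hl.2⟩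
  · simp only [diagM, add_left_inj, hl.1 i]
  · refine (Set.finite_singleton j).subset fun i hi => ?_
    by_contra hne
    exact hi (if_neg hne)

end ThetaAff

theorem LambdaAff.eq_lam0_or_eq_mu0_or_eq_nu0 {l : ℤ → ℕ} (hl : l ∈ LambdaAff 2 2) :
    l = lam0 ∨ l = mu0 ∨ l = nu0 := by
  have hper : Periodic l 2 := hl.1
  have hsum : l 1 + l 2 = 2 := by
    simpa only [sum_Icc_one_two] using hl.2
  have key (i : ℤ) : l i = if (2 : ℤ) ∣ i - 1 then l 1 else l 2 := by
    split_ifs with hi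
    · obtain ⟨k, hk⟩ := hi
      simpa [show i = 1 + k * 2 by omega] using hper.int_mul k 1
    · obtain ⟨k, hk⟩ : (2 : ℤ) ∣ i - 2 := by omega
      simpa [show i = 2 + k * 2 by omega] using hper.int_mul k 2
  rcases (by omega : l 1 = 0 ∨ l 1 = 1 ∨ l 1 = 2) with h1 | h1 | h1
  · right; left
    funext i; rw [key i, mu0]; split_ifs <;> omega
  · right; right
    funext i; rw [key i, nu0]; split_ifs <;> omega
  · left
    funext i; rw [key i, lam0]; split_ifs <;> omega

theorem lam0_mem_lambdaAff : lam0 ∈ LambdaAff 2 2 :=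
  ⟨fun i => by simp only [lam0, Nat.cast_ofNat]; split_ifs <;> omega, by decide⟩

theorem lam0_ne_nu0 : lam0 ≠ nu0 := fun h => by simpa [lam0, nu0] using congrFun h 1

theorem mat2_apply (p a q b x y : ℤ) :
    Mat2 p a q b x y = (if x - p = y - a ∧ (2 : ℤ) ∣ x - p then 1 else 0)
      + (if x - q = y - b ∧ (2 : ℤ) ∣ x - q then 1 else 0) := by
  simp [Mat2, Edel]

theorem edel_row (i j x : ℤ) :
    Edel 2 i j x = if (2 : ℤ) ∣ x - i then Pi.single (x - i + j) 1 else 0 := by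
  funext y
  by_cases h : (2 : ℤ) ∣ x - i
  · rw [if_pos h, Pi.single_apply]; simp only [Edel]; split_ifs <;> omega
  · simp [Edel, h]

theorem edel_col (i j y : ℤ) :
    (fun x => Edel 2 i j x y) = if (2 : ℤ) ∣ y - j then Pi.single (y - j + i) 1 else 0 := by
  funext x
  by_cases h : (2 : ℤ) ∣ y - j
  · rw [if_pos h, Pi.single_apply]; simp only [Edel]; split_ifs <;> omega
  · simp only [Edel, if_neg h, Pi.zero_apply]; split_ifs <;> omega

theorem support_edel_row_finite (i j x : ℤ) : (support (Edel 2 i j x)).Finite := by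
  rw [edel_row]
  split_ifs
  · exact (Set.finite_singleton _).subset Pi.support_single_subset
  · simp

theorem support_edel_col_finite (i j y : ℤ) : (support fun x => Edel 2 i j x y).Finite := by
  rw [edel_col]
  split_ifs
  · exact (Set.finite_singleton _).subset Pi.support_single_subset
  · simp

theorem finsum_edel_row (i j x : ℤ) :
    ∑ᶠ y, Edel 2 i j x y = if (2 : ℤ) ∣ x - i then 1 else 0 := by
  rw [edel_row]
  split_ifs
  · exact finsum_piSingle _ _
  · simp

theorem finsum_edel_col (i j y : ℤ) :
    ∑ᶠ x, Edel 2 i j x y = if (2 : ℤ) ∣ y - j then 1 else 0 := by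
  rw [show ∑ᶠ x, Edel 2 i j x y = ∑ᶠ x, (fun x => Edel 2 i j x y) x from rfl, edel_col]
  split_ifs
  · exact finsum_piSingle _ _
  · exact finsum_zero

theorem rowS_mat2 (p a q b x : ℤ) :
    rowS (Mat2 p a q b) x
      = (if (2 : ℤ) ∣ x - p then 1 else 0) + (if (2 : ℤ) ∣ x - q then 1 else 0) := by
  rw [rowS, ← finsum_edel_row p a x, ← finsum_edel_row q b x]
  exact finsum_add_distrib (support_edel_row_finite p a x) (support_edel_row_finite q b x)

theorem colS_mat2 (p a q b y : ℤ) :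
    colS (Mat2 p a q b) y
      = (if (2 : ℤ) ∣ y - a then 1 else 0) + (if (2 : ℤ) ∣ y - b then 1 else 0) := by
  rw [colS, ← finsum_edel_col p a y, ← finsum_edel_col q b y]
  exact finsum_add_distrib (support_edel_col_finite p a y) (support_edel_col_finite q b y)

theorem mat2_mem_thetaAff (p a q b : ℤ) : Mat2 p a q b ∈ ThetaAff 2 2 := by
  refine ⟨fun i j => ?_, fun i => ?_, fun j => ?_, ?_, ?_⟩
  · simp only [mat2_apply, Nat.cast_ofNat]
    split_ifs <;> omega
  · exact ((support_edel_row_finite p a i).union (support_edel_row_finite q b i)).subset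
      (support_add _ _)
  · exact ((support_edel_col_finite p a j).union (support_edel_col_finite q b j)).subset
      (support_add _ _)
  · rw [sum_Icc_one_two, rowS_mat2, rowS_mat2]
    split_ifs <;> omega
  · rw [sum_Icc_one_two, colS_mat2, colS_mat2]
    split_ifs <;> omega

theorem rowS_mat2_one_two (a b : ℤ) : rowS (Mat2 1 a 2 b) = nu0 :=
  funext fun x => by rw [rowS_mat2, nu0]; split_ifs <;> omega

theorem rowS_mat2_one_one (a b : ℤ) : rowS (Mat2 1 a 1 b) = lam0 :=
  funext fun x => by rw [rowS_mat2, lam0]; split_ifs <;> omega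

theorem rowS_mat2_two_two (a b : ℤ) : rowS (Mat2 2 a 2 b) = mu0 :=
  funext fun x => by rw [rowS_mat2, mu0]; split_ifs <;> omega

theorem colS_mat2_eq_nu0_iff (p a q b : ℤ) : colS (Mat2 p a q b) = nu0 ↔ ¬ (2 : ℤ) ∣ a + b := by
  constructor
  · intro h
    have := congrFun h a
    rw [colS_mat2, nu0] at this
    split_ifs at this <;> omega
  · intro h
    funext y
    rw [colS_mat2, nu0]
    split_ifs <;> omega

theorem colS_mat2_eq_lam0_iff (p a q b : ℤ) :
    colS (Mat2 p a q b) = lam0 ↔ (2 : ℤ) ∣ a - 1 ∧ (2 : ℤ) ∣ b - 1 := by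
  constructor
  · intro h
    have ha := congrFun h a
    have hb := congrFun h b
    rw [colS_mat2, lam0] at ha hb
    split_ifs at ha hb <;> omega
  · intro h
    funext y
    rw [colS_mat2, lam0]
    split_ifs <;> omega

theorem diagM_nu0 : diagM nu0 = Mat2 1 1 2 2 := by
  funext x y; simp only [diagM, nu0, mat2_apply]; split_ifs <;> omega

theorem mat2_one_two_injective : Injective fun p : ℤ × ℤ => Mat2 1 p.1 2 p.2 := by
  rintro ⟨a, b⟩ ⟨a', b'⟩ h
  have h1 := congrFun (congrFun h 1) a
  have h2 := congrFun (congrFun h 2) b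
  simp only [mat2_apply] at h1 h2
  ext <;> dsimp only <;> split_ifs at h1 h2 <;> omega

theorem eq_mat2_one_two_of_rowS_eq_nu0 {A : ℤ → ℤ → ℕ} (hA : A ∈ ThetaAff 2 2)
    (h : rowS A = nu0) : ∃ a b, A = Mat2 1 a 2 b := by
  obtain ⟨a, ha⟩ := exists_eq_single_of_finsum_eq_one (hA.2.1 1) (congrFun h 1)
  obtain ⟨b, hb⟩ := exists_eq_single_of_finsum_eq_one (hA.2.1 2) (congrFun h 2)
  refine ⟨a, b, ThetaAff.ext_of_rows two_pos hA (mat2_mem_thetaAff 1 a 2 b) fun i hi => ?_⟩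
  have hi12 : i = 1 ∨ i = 2 := by simp only [Finset.mem_Icc, Nat.cast_ofNat] at hi; omega
  rcases hi12 with rfl | rfl
  · rw [ha]; funext y; simp only [mat2_apply, Pi.single_apply]; split_ifs <;> omega
  · rw [hb]; funext y; simp only [mat2_apply, Pi.single_apply]; split_ifs <;> omega

theorem eq_mat2_one_one_of_rowS_eq_lam0 {A : ℤ → ℤ → ℕ} (hA : A ∈ ThetaAff 2 2)
    (h : rowS A = lam0) : ∃ a b, A = Mat2 1 a 1 b := by
  obtain ⟨a, b, hab⟩ := exists_eq_single_add_single_of_finsum_eq_two (hA.2.1 1)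
    (by simpa [rowS, lam0] using congrFun h 1)
  have h2 := eq_zero_of_finsum_eq_zero (hA.2.1 2) (by simpa [rowS, lam0] using congrFun h 2)
  refine ⟨a, b, ThetaAff.ext_of_rows two_pos hA (mat2_mem_thetaAff 1 a 1 b) fun i hi => ?_⟩
  have hi12 : i = 1 ∨ i = 2 := by simp only [Finset.mem_Icc, Nat.cast_ofNat] at hi; omega
  rcases hi12 with rfl | rfl
  · rw [hab]; funext y; simp only [mat2_apply, Pi.add_apply, Pi.single_apply]; split_ifs <;> omega
  · rw [h2]; funext y; simp only [mat2_apply, Pi.zero_apply]; split_ifs <;> omega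

namespace AffineSchurAlg

variable {n r : ℕ} {S : Type} [Ring S] [Algebra ℚ S] (H : AffineSchurAlg n r S)

def basis : Module.Basis (ThetaAff n r) ℚ S :=
  Module.Basis.mk H.indep (by rw [← Set.image_eq_range, H.span_eq_top])

theorem basis_apply (A : ThetaAff n r) : H.basis A = H.e A :=
  Module.Basis.mk_apply _ _ _

@[elab_as_elim]
theorem induction_on {motive : S → Prop} (e : ∀ A ∈ ThetaAff n r, motive (H.e A))
    (zero : motive 0) (add : ∀ x y, motive x → motive y → motive (x + y))
    (smul : ∀ (c : ℚ) x, motive x → motive (c • x)) (x : S) : motive x := by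
  have hx : x ∈ Submodule.span ℚ (H.e '' ThetaAff n r) := H.span_eq_top ▸ trivial
  induction hx using Submodule.span_induction with
  | mem y hy => obtain ⟨A, hA, rfl⟩ := hy; exact e A hA
  | zero => exact zero
  | add x y _ _ hx hy => exact add x y hx hy
  | smul c x _ hx => exact smul c x hx

end AffineSchurAlg

namespace AffineSchur22

variable {S : Type} [Ring S] [Algebra ℚ S] (H : AffineSchur22 S)

theorem e_rowPlus_mul_e (h : ℤ) {A : ℤ → ℤ → ℕ} (hA : A ∈ ThetaAff 2 2)
    (hrow : rowS A (h + 1) ≠ 0) :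
    H.e (fun x y => diagM (rowS A) x y + Edel 2 h (h + 1) x y - Edel 2 (h + 1) (h + 1) x y)
        * H.e A
      = ∑ᶠ p ∈ support (A (h + 1)), ((A h p + 1 : ℕ) : ℚ) • H.e (rowAdd 2 h (Pi.single p 1) A) := by
  simpa only [one_mul, finsum_mem_compInf_one_le, finprod_choose_add_piSingle,
    Nat.choose_one_right] using H.lusztig_row_plus h 1 A hA (Nat.one_le_iff_ne_zero.mpr hrow)

theorem e_rowMinus_mul_e (h : ℤ) {A : ℤ → ℤ → ℕ} (hA : A ∈ ThetaAff 2 2)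
    (hrow : rowS A h ≠ 0) :
    H.e (fun x y => diagM (rowS A) x y - Edel 2 h h x y + Edel 2 (h + 1) h x y) * H.e A
      = ∑ᶠ p ∈ support (A h), ((A (h + 1) p + 1 : ℕ) : ℚ) • H.e (rowSub 2 h (Pi.single p 1) A) := by
  simpa only [one_mul, finsum_mem_compInf_one_le, finprod_choose_add_piSingle,
    Nat.choose_one_right] using H.lusztig_row_minus h 1 A hA (Nat.one_le_iff_ne_zero.mpr hrow)

theorem e_mul_e_colPlus (h : ℤ) {A : ℤ → ℤ → ℕ} (hA : A ∈ ThetaAff 2 2)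
    (hcol : colS A h ≠ 0) :
    H.e A * H.e (fun x y => diagM (colS A) x y + Edel 2 h (h + 1) x y - Edel 2 h h x y)
      = ∑ᶠ p ∈ support (fun u => A u h),
          ((A p (h + 1) + 1 : ℕ) : ℚ) • H.e (colAdd 2 h (Pi.single p 1) A) := by
  simpa only [one_mul, finsum_mem_compInf_one_le, finprod_choose_add_piSingle,
    Nat.choose_one_right] using H.lusztig_col_plus h 1 A hA (Nat.one_le_iff_ne_zero.mpr hcol)

theorem e_mul_e_colMinus (h : ℤ) {A : ℤ → ℤ → ℕ} (hA : A ∈ ThetaAff 2 2)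
    (hcol : colS A (h + 1) ≠ 0) :
    H.e A * H.e (fun x y => diagM (colS A) x y - Edel 2 (h + 1) (h + 1) x y + Edel 2 (h + 1) h x y)
      = ∑ᶠ p ∈ support (fun u => A u (h + 1)),
          ((A p h + 1 : ℕ) : ℚ) • H.e (colSub 2 h (Pi.single p 1) A) := by
  simpa only [one_mul, finsum_mem_compInf_one_le, finprod_choose_add_piSingle,
    Nat.choose_one_right] using H.lusztig_col_minus h 1 A hA (Nat.one_le_iff_ne_zero.mpr hcol)

theorem e_raise_mul_e {c d : ℤ} (hcd : c ≠ d) :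
    H.e (Mat2 1 1 1 2) * H.e (Mat2 1 c 2 d) = H.e (Mat2 1 c 1 d) := by
  have := H.e_rowPlus_mul_e 1 (mat2_mem_thetaAff 1 c 2 d) (by simp [rowS_mat2_one_two, nu0])
  rwa [rowS_mat2_one_two,
    show support (Mat2 1 c 2 d (1 + 1)) = {d} by
      ext u; simp only [mem_support, mat2_apply, Set.mem_singleton_iff]
      split_ifs <;> omega,
    finsum_mem_singleton, show Mat2 1 c 2 d 1 d = 0 by rw [mat2_apply]; split_ifs <;> omega,
    show (fun x y => diagM nu0 x y + Edel 2 1 (1 + 1) x y - Edel 2 (1 + 1) (1 + 1) x y)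
      = Mat2 1 1 1 2 by funext x y; simp only [diagM, nu0, Edel, mat2_apply]; split_ifs <;> omega,
    show rowAdd 2 1 (Pi.single d 1) (Mat2 1 c 2 d) = Mat2 1 c 1 d by
      funext x y; simp only [rowAdd, mat2_apply, Pi.single_apply]; split_ifs <;> omega,
    zero_add, Nat.cast_one, one_smul] at this

theorem e_lower_mul_e {c d : ℤ} (hcd : c ≠ d) :
    H.e (Mat2 2 1 2 2) * H.e (Mat2 1 c 2 d) = H.e (Mat2 2 c 2 d) := by
  have := H.e_rowMinus_mul_e 1 (mat2_mem_thetaAff 1 c 2 d) (by simp [rowS_mat2_one_two, nu0])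
  rwa [rowS_mat2_one_two,
    show support (Mat2 1 c 2 d 1) = {c} by
      ext u; simp only [mem_support, mat2_apply, Set.mem_singleton_iff]
      split_ifs <;> omega,
    finsum_mem_singleton, show Mat2 1 c 2 d (1 + 1) c = 0 by rw [mat2_apply]; split_ifs <;> omega,
    show (fun x y => diagM nu0 x y - Edel 2 1 1 x y + Edel 2 (1 + 1) 1 x y) = Mat2 2 1 2 2 by
      funext x y; simp only [diagM, nu0, Edel, mat2_apply]; split_ifs <;> omega,
    show rowSub 2 1 (Pi.single c 1) (Mat2 1 c 2 d) = Mat2 2 c 2 d by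
      funext x y; simp only [rowSub, mat2_apply, Pi.single_apply]; split_ifs <;> omega,
    zero_add, Nat.cast_one, one_smul] at this

theorem e_raise_mul_e_mat2_two_two {c d : ℤ} (hcd : c ≠ d) :
    H.e (Mat2 1 2 2 2) * H.e (Mat2 2 c 2 d) = H.e (Mat2 1 c 2 d) + H.e (Mat2 1 d 2 c) := by
  have := H.e_rowPlus_mul_e 1 (mat2_mem_thetaAff 2 c 2 d) (by simp [rowS_mat2_two_two, mu0])
  rwa [rowS_mat2_two_two,
    show support (Mat2 2 c 2 d (1 + 1)) = {c, d} by
      ext u; simp only [mem_support, mat2_apply, Set.mem_insert_iff, Set.mem_singleton_iff]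
      split_ifs <;> omega,
    finsum_mem_pair hcd, show Mat2 2 c 2 d 1 c = 0 by rw [mat2_apply]; split_ifs <;> omega,
    show Mat2 2 c 2 d 1 d = 0 by rw [mat2_apply]; split_ifs <;> omega,
    show (fun x y => diagM mu0 x y + Edel 2 1 (1 + 1) x y - Edel 2 (1 + 1) (1 + 1) x y)
      = Mat2 1 2 2 2 by funext x y; simp only [diagM, mu0, Edel, mat2_apply]; split_ifs <;> omega,
    show rowAdd 2 1 (Pi.single c 1) (Mat2 2 c 2 d) = Mat2 1 c 2 d by
      funext x y; simp only [rowAdd, mat2_apply, Pi.single_apply]; split_ifs <;> omega,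
    show rowAdd 2 1 (Pi.single d 1) (Mat2 2 c 2 d) = Mat2 1 d 2 c by
      funext x y; simp only [rowAdd, mat2_apply, Pi.single_apply]; split_ifs <;> omega,
    zero_add, Nat.cast_one, one_smul, one_smul] at this

theorem e_mul_e_raise {a b : ℤ} (ha : (2 : ℤ) ∣ a - 1) (hb : (2 : ℤ) ∣ b - 1) :
    H.e (Mat2 1 a 2 b) * H.e (Mat2 1 1 1 2)
      = H.e (Mat2 1 (a + 1) 2 b) + H.e (Mat2 1 a 2 (b + 1)) := by
  have hcol : colS (Mat2 1 a 2 b) = lam0 := (colS_mat2_eq_lam0_iff 1 a 2 b).mpr ⟨ha, hb⟩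
  have := H.e_mul_e_colPlus 1 (mat2_mem_thetaAff 1 a 2 b) (by simp [hcol, lam0])
  rwa [hcol,
    show support (fun u => Mat2 1 a 2 b u 1) = {2 - a, 3 - b} by
      ext u; simp only [mem_support, mat2_apply, Set.mem_insert_iff, Set.mem_singleton_iff]
      split_ifs <;> omega,
    finsum_mem_pair (by omega),
    show Mat2 1 a 2 b (2 - a) (1 + 1) = 0 by rw [mat2_apply]; split_ifs <;> omega,
    show Mat2 1 a 2 b (3 - b) (1 + 1) = 0 by rw [mat2_apply]; split_ifs <;> omega,
    show (fun x y => diagM lam0 x y + Edel 2 1 (1 + 1) x y - Edel 2 1 1 x y) = Mat2 1 1 1 2 by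
      funext x y; simp only [diagM, lam0, Edel, mat2_apply]; split_ifs <;> omega,
    show colAdd 2 1 (Pi.single (2 - a) 1) (Mat2 1 a 2 b) = Mat2 1 (a + 1) 2 b by
      funext x y; simp only [colAdd, mat2_apply, Pi.single_apply]; split_ifs <;> omega,
    show colAdd 2 1 (Pi.single (3 - b) 1) (Mat2 1 a 2 b) = Mat2 1 a 2 (b + 1) by
      funext x y; simp only [colAdd, mat2_apply, Pi.single_apply]; split_ifs <;> omega,
    zero_add, Nat.cast_one, one_smul, one_smul] at this

theorem e_mul_e_lower {a b : ℤ} (ha : (2 : ℤ) ∣ a - 1) (hb : (2 : ℤ) ∣ b - 1) :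
    H.e (Mat2 1 a 2 b) * H.e (Mat2 1 1 1 0)
      = H.e (Mat2 1 (a - 1) 2 b) + H.e (Mat2 1 a 2 (b - 1)) := by
  have hcol : colS (Mat2 1 a 2 b) = lam0 := (colS_mat2_eq_lam0_iff 1 a 2 b).mpr ⟨ha, hb⟩
  have := H.e_mul_e_colMinus 2 (mat2_mem_thetaAff 1 a 2 b) (by simp [hcol, lam0])
  rwa [hcol,
    show support (fun u => Mat2 1 a 2 b u (2 + 1)) = {4 - a, 5 - b} by
      ext u; simp only [mem_support, mat2_apply, Set.mem_insert_iff, Set.mem_singleton_iff]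
      split_ifs <;> omega,
    finsum_mem_pair (by omega),
    show Mat2 1 a 2 b (4 - a) 2 = 0 by rw [mat2_apply]; split_ifs <;> omega,
    show Mat2 1 a 2 b (5 - b) 2 = 0 by rw [mat2_apply]; split_ifs <;> omega,
    show (fun x y => diagM lam0 x y - Edel 2 (2 + 1) (2 + 1) x y + Edel 2 (2 + 1) 2 x y)
      = Mat2 1 1 1 0 by funext x y; simp only [diagM, lam0, Edel, mat2_apply]; split_ifs <;> omega,
    show colSub 2 2 (Pi.single (4 - a) 1) (Mat2 1 a 2 b) = Mat2 1 (a - 1) 2 b by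
      funext x y; simp only [colSub, mat2_apply, Pi.single_apply]; split_ifs <;> omega,
    show colSub 2 2 (Pi.single (5 - b) 1) (Mat2 1 a 2 b) = Mat2 1 a 2 (b - 1) by
      funext x y; simp only [colSub, mat2_apply, Pi.single_apply]; split_ifs <;> omega,
    zero_add, Nat.cast_one, one_smul, one_smul] at this

theorem e_diagM_nu0_mul_e (c d : ℤ) :
    H.e (Mat2 1 1 2 2) * H.e (Mat2 1 c 2 d) = H.e (Mat2 1 c 2 d) := by
  simpa only [rowS_mat2_one_two, diagM_nu0] using H.diag_row _ (mat2_mem_thetaAff 1 c 2 d)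

theorem e_shift_one_mul_e (k c d : ℤ) :
    H.e (Mat2 1 (1 + 2 * k) 2 2) * H.e (Mat2 1 c 2 d) = H.e (Mat2 1 (c + 2 * k) 2 d) := by
  rcases eq_or_ne k 0 with rfl | hk
  · simpa using H.e_diagM_nu0_mul_e c d
  have := H.lusztig_shift 1 k hk _ (mat2_mem_thetaAff 1 c 2 d) (by simp [rowS_mat2_one_two, nu0])
  rwa [rowS_mat2_one_two,
    show {u | 1 ≤ Mat2 1 c 2 d 1 u} = {c} by
      ext u; simp only [Set.mem_ofPred_eq, Set.mem_singleton_iff, mat2_apply]; split_ifs <;> omega,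
    finsum_mem_singleton,
    show Mat2 1 c 2 d 1 (c + 2 * k) = 0 by rw [mat2_apply]; split_ifs <;> omega,
    show (fun x y => diagM nu0 x y - Edel 2 1 1 x y + Edel 2 1 (1 + 2 * k) x y)
      = Mat2 1 (1 + 2 * k) 2 2 by
      funext x y; simp only [diagM, nu0, Edel, mat2_apply]; split_ifs <;> omega,
    show (fun x y => Mat2 1 c 2 d x y + Edel 2 1 (c + 2 * k) x y - Edel 2 1 c x y)
      = Mat2 1 (c + 2 * k) 2 d by
      funext x y; simp only [Edel, mat2_apply]; split_ifs <;> omega,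
    zero_add, Nat.cast_one, one_smul] at this

theorem e_shift_two_mul_e (k c d : ℤ) :
    H.e (Mat2 1 1 2 (2 + 2 * k)) * H.e (Mat2 1 c 2 d) = H.e (Mat2 1 c 2 (d + 2 * k)) := by
  rcases eq_or_ne k 0 with rfl | hk
  · simpa using H.e_diagM_nu0_mul_e c d
  have := H.lusztig_shift 2 k hk _ (mat2_mem_thetaAff 1 c 2 d) (by simp [rowS_mat2_one_two, nu0])
  rwa [rowS_mat2_one_two,
    show {u | 1 ≤ Mat2 1 c 2 d 2 u} = {d} by
      ext u; simp only [Set.mem_ofPred_eq, Set.mem_singleton_iff, mat2_apply]; split_ifs <;> omega,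
    finsum_mem_singleton,
    show Mat2 1 c 2 d 2 (d + 2 * k) = 0 by rw [mat2_apply]; split_ifs <;> omega,
    show (fun x y => diagM nu0 x y - Edel 2 2 2 x y + Edel 2 2 (2 + 2 * k) x y)
      = Mat2 1 1 2 (2 + 2 * k) by
      funext x y; simp only [diagM, nu0, Edel, mat2_apply]; split_ifs <;> omega,
    show (fun x y => Mat2 1 c 2 d x y + Edel 2 2 (d + 2 * k) x y - Edel 2 2 d x y)
      = Mat2 1 c 2 (d + 2 * k) by
      funext x y; simp only [Edel, mat2_apply]; split_ifs <;> omega,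
    zero_add, Nat.cast_one, one_smul] at this

theorem e_shift_mul_e (m l c d : ℤ) :
    H.e (Mat2 1 (1 + 2 * m) 2 (2 + 2 * l)) * H.e (Mat2 1 c 2 d)
      = H.e (Mat2 1 (c + 2 * m) 2 (d + 2 * l)) := by
  rw [← H.e_shift_one_mul_e m 1 (2 + 2 * l), mul_assoc, H.e_shift_two_mul_e,
    H.e_shift_one_mul_e]

theorem e_swap_mul_e {c d : ℤ} (hcd : c ≠ d) :
    H.e (Mat2 1 2 2 1) * H.e (Mat2 1 c 2 d) = H.e (Mat2 1 d 2 c) := by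
  have hswap : H.e (Mat2 1 2 2 1)
      = H.e (Mat2 1 2 2 2) * H.e (Mat2 2 1 2 2) - H.e (Mat2 1 1 2 2) := by
    rw [H.e_raise_mul_e_mat2_two_two (by norm_num : (1 : ℤ) ≠ 2)]
    abel
  rw [hswap, sub_mul, mul_assoc, H.e_lower_mul_e hcd, H.e_raise_mul_e_mat2_two_two hcd,
    H.e_diagM_nu0_mul_e]
  abel

theorem e_mul_e_eq_e_diagM_mu0 :
    H.e (Mat2 2 1 2 1) * H.e (Mat2 1 2 1 2) = H.e (diagM mu0) := by
  have hcol : colS (Mat2 2 1 2 1) = lam0 := (colS_mat2_eq_lam0_iff 2 1 2 1).mpr (by norm_num)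
  have := H.lusztig_col_plus 1 2 _ (mat2_mem_thetaAff 2 1 2 1) (by simp [hcol, lam0])
  simp only [show ∀ u, Mat2 2 1 2 1 u 1 = (Pi.single 2 2 : ℤ → ℕ) u by
    intro u; simp only [mat2_apply, Pi.single_apply]; split_ifs <;> omega] at this
  rwa [hcol, setOf_mem_compInf_le_single, finsum_mem_singleton, finprod_choose_add_piSingle,
    show Mat2 2 1 2 1 2 (1 + 1) = 0 by rw [mat2_apply]; split_ifs <;> omega,
    show (fun x y => diagM lam0 x y + 2 * Edel 2 1 (1 + 1) x y - 2 * Edel 2 1 1 x y)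
      = Mat2 1 2 1 2 by funext x y; simp only [diagM, lam0, Edel, mat2_apply]; split_ifs <;> omega,
    show colAdd 2 1 (Pi.single 2 2) (Mat2 2 1 2 1) = diagM mu0 by
      funext x y; simp only [colAdd, diagM, mu0, mat2_apply, Pi.single_apply]; split_ifs <;> omega,
    zero_add, Nat.choose_self, Nat.cast_one, one_smul] at this

theorem e_mul_e_of_two_dvd_sub_one {a b : ℤ} (ha : (2 : ℤ) ∣ a - 1) (hb : (2 : ℤ) ∣ b) (c d : ℤ) :
    H.e (Mat2 1 a 2 b) * H.e (Mat2 1 c 2 d) = H.e (Mat2 1 (c + a - 1) 2 (d + b - 2)) := by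
  have := H.e_shift_mul_e ((a - 1) / 2) ((b - 2) / 2) c d
  rwa [show 1 + 2 * ((a - 1) / 2) = a by omega, show 2 + 2 * ((b - 2) / 2) = b by omega,
    show c + 2 * ((a - 1) / 2) = c + a - 1 by omega,
    show d + 2 * ((b - 2) / 2) = d + b - 2 by omega] at this

theorem e_mul_e_of_two_dvd {a b : ℤ} (ha : (2 : ℤ) ∣ a) (hb : (2 : ℤ) ∣ b - 1) {c d : ℤ}
    (hcd : c ≠ d) :
    H.e (Mat2 1 a 2 b) * H.e (Mat2 1 c 2 d) = H.e (Mat2 1 (d + a - 2) 2 (c + b - 1)) := by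
  have hfactor := H.e_shift_mul_e ((a - 2) / 2) ((b - 1) / 2) 2 1
  rw [show 2 + 2 * ((a - 2) / 2) = a by omega, show 1 + 2 * ((b - 1) / 2) = b by omega]
    at hfactor
  rw [← hfactor, mul_assoc, H.e_swap_mul_e hcd, H.e_shift_mul_e,
    show d + 2 * ((a - 2) / 2) = d + a - 2 by omega,
    show c + 2 * ((b - 1) / 2) = c + b - 1 by omega]

end AffineSchur22

open LaurentPolynomial

-- `(a + b - 3) / 2` is an exact division whenever the value is not `0`, as `a + b` is then odd.
def mat2Val (a b : ℤ) : LaurentPolynomial ℚ :=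
  if (2 : ℤ) ∣ a + b then 0 else (-1 : ℚ) ^ b • T ((a + b - 3) / 2)

theorem mat2Val_of_not_two_dvd {a b : ℤ} (h : ¬ (2 : ℤ) ∣ a + b) :
    mat2Val a b = (-1 : ℚ) ^ b • T ((a + b - 3) / 2) := if_neg h

theorem mat2Val_one_add_two_mul (k : ℤ) : mat2Val (1 + 2 * k) 2 = T k := by
  rw [mat2Val_of_not_two_dvd (by omega), show (1 + 2 * k + 2 - 3) / 2 = k by omega]
  simp

theorem mat2Val_add_one_add_mat2Val_add_one (a b : ℤ) :
    mat2Val (a + 1) b + mat2Val a (b + 1) = 0 := by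
  by_cases h : (2 : ℤ) ∣ a + b
  · rw [mat2Val_of_not_two_dvd (by omega), mat2Val_of_not_two_dvd (by omega),
      show a + (b + 1) = a + 1 + b by ring, zpow_add_one₀ (by norm_num), mul_neg_one, neg_smul,
      add_neg_cancel]
  · rw [mat2Val, mat2Val, if_pos (by omega), if_pos (by omega), add_zero]

theorem mat2Val_mul_of_two_dvd_sub_one {a b c d : ℤ} (ha : (2 : ℤ) ∣ a - 1)
    (hab : ¬ (2 : ℤ) ∣ a + b) (hcd : ¬ (2 : ℤ) ∣ c + d) :
    mat2Val a b * mat2Val c d = mat2Val (c + a - 1) (d + b - 2) := by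
  rw [mat2Val_of_not_two_dvd hab, mat2Val_of_not_two_dvd hcd, mat2Val_of_not_two_dvd (by omega),
    smul_mul_smul_comm, ← T_add, ← zpow_add₀ (by norm_num),
    neg_one_zpow_eq_of_two_dvd_sub (show (2 : ℤ) ∣ b + d - (d + b - 2) by omega)]
  congr 2
  omega

theorem mat2Val_mul_of_two_dvd {a b c d : ℤ} (ha : (2 : ℤ) ∣ a)
    (hab : ¬ (2 : ℤ) ∣ a + b) (hcd : ¬ (2 : ℤ) ∣ c + d) :
    mat2Val a b * mat2Val c d = mat2Val (d + a - 2) (c + b - 1) := by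
  rw [mat2Val_of_not_two_dvd hab, mat2Val_of_not_two_dvd hcd, mat2Val_of_not_two_dvd (by omega),
    smul_mul_smul_comm, ← T_add, ← zpow_add₀ (by norm_num),
    neg_one_zpow_eq_of_two_dvd_sub (show (2 : ℤ) ∣ b + d - (c + b - 1) by omega)]
  congr 2
  omega

def matVal : (ℤ → ℤ → ℕ) → LaurentPolynomial ℚ :=
  extend (fun p : ℤ × ℤ => Mat2 1 p.1 2 p.2) (fun p => mat2Val p.1 p.2) 0

theorem matVal_mat2 (a b : ℤ) : matVal (Mat2 1 a 2 b) = mat2Val a b :=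
  mat2_one_two_injective.extend_apply _ _ (a, b)

theorem matVal_eq_zero {A : ℤ → ℤ → ℕ} (h : ∀ a b, Mat2 1 a 2 b ≠ A) : matVal A = 0 :=
  extend_apply' _ _ _ fun ⟨⟨a, b⟩, hab⟩ => h a b hab

theorem matVal_eq_zero_of_rowS_ne {A : ℤ → ℤ → ℕ} (h : rowS A ≠ nu0) : matVal A = 0 :=
  matVal_eq_zero fun a b hab => h (hab ▸ rowS_mat2_one_two a b)

theorem matVal_eq_zero_of_colS_ne {A : ℤ → ℤ → ℕ} (h : colS A ≠ nu0) : matVal A = 0 := by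
  by_cases hA : ∃ a b, Mat2 1 a 2 b = A
  · obtain ⟨a, b, rfl⟩ := hA
    rw [matVal_mat2, mat2Val, if_pos (not_not.mp ((colS_mat2_eq_nu0_iff 1 a 2 b).not.mp h))]
  · exact matVal_eq_zero fun a b hab => hA ⟨a, b, hab⟩

namespace AffineSchur22

variable {S : Type} [Ring S] [Algebra ℚ S] (H : AffineSchur22 S)

def lamIdeal : Submodule ℚ S :=
  Submodule.span ℚ {y : S | ∃ a b : S, y = a * H.e (diagM lam0) * b}

theorem mul_mem_lamIdeal_left (x : S) {z : S} (hz : z ∈ H.lamIdeal) : x * z ∈ H.lamIdeal := by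
  induction hz using Submodule.span_induction with
  | mem y hy =>
    obtain ⟨a, b, rfl⟩ := hy
    exact Submodule.subset_span ⟨x * a, b, by simp only [mul_assoc]⟩
  | zero => simp
  | add y z _ _ hy hz => simpa [mul_add] using H.lamIdeal.add_mem hy hz
  | smul c y _ hy => simpa [mul_smul_comm] using H.lamIdeal.smul_mem c hy

theorem mul_mem_lamIdeal_right {z : S} (hz : z ∈ H.lamIdeal) (x : S) : z * x ∈ H.lamIdeal := by
  induction hz using Submodule.span_induction with
  | mem y hy =>
    obtain ⟨a, b, rfl⟩ := hy
    exact Submodule.subset_span ⟨a, b * x, by simp only [mul_assoc]⟩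
  | zero => simp
  | add y z _ _ hy hz => simpa [add_mul] using H.lamIdeal.add_mem hy hz
  | smul c y _ hy => simpa [smul_mul_assoc] using H.lamIdeal.smul_mem c hy

theorem e_diagM_lam0_mem : H.e (diagM lam0) ∈ H.lamIdeal :=
  Submodule.subset_span ⟨1, 1, by rw [one_mul, mul_one]⟩

theorem e_diagM_mu0_mem : H.e (diagM mu0) ∈ H.lamIdeal := by
  have hcol : colS (Mat2 2 1 2 1) = lam0 := (colS_mat2_eq_lam0_iff 2 1 2 1).mpr (by norm_num)
  rw [← H.e_mul_e_eq_e_diagM_mu0, ← H.diag_col _ (mat2_mem_thetaAff 2 1 2 1), hcol]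
  exact Submodule.subset_span ⟨_, _, rfl⟩

theorem e_diagM_mem_of_ne_nu0 {w : ℤ → ℕ} (hw : w ∈ LambdaAff 2 2) (hne : w ≠ nu0) :
    H.e (diagM w) ∈ H.lamIdeal := by
  rcases LambdaAff.eq_lam0_or_eq_mu0_or_eq_nu0 hw with rfl | rfl | rfl
  · exact H.e_diagM_lam0_mem
  · exact H.e_diagM_mu0_mem
  · exact absurd rfl hne

theorem e_mem_lamIdeal_of_rowS_ne {A : ℤ → ℤ → ℕ} (hA : A ∈ ThetaAff 2 2) (h : rowS A ≠ nu0) :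
    H.e A ∈ H.lamIdeal := by
  rw [← H.diag_row A hA]
  exact H.mul_mem_lamIdeal_right (H.e_diagM_mem_of_ne_nu0 (ThetaAff.rowS_mem hA) h) _

theorem e_mem_lamIdeal_of_colS_ne {A : ℤ → ℤ → ℕ} (hA : A ∈ ThetaAff 2 2) (h : colS A ≠ nu0) :
    H.e A ∈ H.lamIdeal := by
  rw [← H.diag_col A hA]
  exact H.mul_mem_lamIdeal_left _ (H.e_diagM_mem_of_ne_nu0 (ThetaAff.colS_mem hA) h)

theorem e_mat2_add_e_mat2_add_one_sub_one_mem {a b : ℤ} (hab : ¬ (2 : ℤ) ∣ a + b) :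
    H.e (Mat2 1 a 2 b) + H.e (Mat2 1 (a + 1) 2 (b - 1)) ∈ H.lamIdeal := by
  by_cases ha : (2 : ℤ) ∣ a - 1
  · have := H.e_mul_e_raise ha (show (2 : ℤ) ∣ b - 1 - 1 by omega)
    rw [sub_add_cancel, add_comm] at this
    rw [← this]
    exact H.mul_mem_lamIdeal_left _ (H.e_mem_lamIdeal_of_rowS_ne (mat2_mem_thetaAff 1 1 1 2)
      (by rw [rowS_mat2_one_one]; exact lam0_ne_nu0))
  · have := H.e_mul_e_lower (show (2 : ℤ) ∣ a + 1 - 1 by omega) (show (2 : ℤ) ∣ b - 1 by omega)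
    rw [add_sub_cancel_right] at this
    rw [← this]
    exact H.mul_mem_lamIdeal_left _ (H.e_mem_lamIdeal_of_rowS_ne (mat2_mem_thetaAff 1 1 1 0)
      (by rw [rowS_mat2_one_one]; exact lam0_ne_nu0))

def ofLaurent : LaurentPolynomial ℚ →ₗ[ℚ] S :=
  (AddMonoidAlgebra.basis ℤ ℚ).constr ℚ fun k => H.e (Mat2 1 (1 + 2 * k) 2 2)

theorem ofLaurent_T (k : ℤ) : H.ofLaurent (T k) = H.e (Mat2 1 (1 + 2 * k) 2 2) :=
  (AddMonoidAlgebra.basis ℤ ℚ).constr_basis ℚ _ k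

theorem ofLaurent_mul (p q : LaurentPolynomial ℚ) :
    H.ofLaurent (p * q) = H.ofLaurent p * H.ofLaurent q := by
  have : (LinearMap.mul ℚ (LaurentPolynomial ℚ)).compr₂ H.ofLaurent
      = (LinearMap.mul ℚ S).compl₁₂ H.ofLaurent H.ofLaurent := by
    refine LinearMap.ext_basis (AddMonoidAlgebra.basis ℤ ℚ) (AddMonoidAlgebra.basis ℤ ℚ)
      fun k l => ?_
    simp only [LinearMap.compr₂_apply, LinearMap.compl₁₂_apply, LinearMap.mul_apply',
      AddMonoidAlgebra.basis_apply]
    change H.ofLaurent (T k * T l) = H.ofLaurent (T k) * H.ofLaurent (T l)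
    rw [← T_add, ofLaurent_T, ofLaurent_T, ofLaurent_T, H.e_shift_one_mul_e,
      show 1 + 2 * (k + l) = 1 + 2 * l + 2 * k by ring]
  exact LinearMap.congr_fun₂ this p q

theorem ofLaurent_mat2Val {a b : ℤ} (hab : ¬ (2 : ℤ) ∣ a + b) :
    H.ofLaurent (mat2Val a b) = (-1 : ℚ) ^ b • H.e (Mat2 1 (a + b - 2) 2 2) := by
  rw [mat2Val_of_not_two_dvd hab, map_smul, ofLaurent_T,
    show 1 + 2 * ((a + b - 3) / 2) = a + b - 2 by omega]

def toLaurent : S →ₗ[ℚ] LaurentPolynomial ℚ :=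
  H.basis.constr ℚ fun A => matVal A.1

theorem toLaurent_e (A : ℤ → ℤ → ℕ) : H.toLaurent (H.e A) = matVal A := by
  by_cases hA : A ∈ ThetaAff 2 2
  · rw [← H.basis_apply ⟨A, hA⟩]
    exact H.basis.constr_basis ℚ _ _
  · rw [H.vanish A hA, map_zero,
      matVal_eq_zero fun a b hab => hA (by rw [← hab]; exact mat2_mem_thetaAff 1 a 2 b)]

theorem toLaurent_ofLaurent (p : LaurentPolynomial ℚ) : H.toLaurent (H.ofLaurent p) = p := by
  have : H.toLaurent ∘ₗ H.ofLaurent = LinearMap.id :=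
    (AddMonoidAlgebra.basis ℤ ℚ).ext fun k => by
      change H.toLaurent (H.ofLaurent (T k)) = T k
      rw [ofLaurent_T, toLaurent_e, matVal_mat2, mat2Val_one_add_two_mul]
  exact LinearMap.congr_fun this p

theorem e_mat2_sub_ofLaurent_mem {a b : ℤ} (hab : ¬ (2 : ℤ) ∣ a + b) :
    H.e (Mat2 1 a 2 b) - H.ofLaurent (mat2Val a b) ∈ H.lamIdeal := by
  set g : ℤ → S := fun j => (-1 : ℚ) ^ j • H.e (Mat2 1 (a + j) 2 (b - j))
  have hstep (j : ℤ) : g (j + 1) - g j ∈ H.lamIdeal.toAddSubgroup := by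
    have := H.lamIdeal.smul_mem (-(-1 : ℚ) ^ j)
      (H.e_mat2_add_e_mat2_add_one_sub_one_mem (a := a + j) (b := b - j) (by omega))
    rw [Submodule.mem_toAddSubgroup]
    convert this using 1
    simp only [g, zpow_add_one₀ (show (-1 : ℚ) ≠ 0 by norm_num), mul_neg_one, neg_smul, smul_add,
      show a + (j + 1) = a + j + 1 by ring, show b - (j + 1) = b - j - 1 by ring]
    abel
  have := H.lamIdeal.neg_mem (AddSubgroup.sub_mem_of_forall_add_one_sub_mem _ hstep (b - 2))
  rw [ofLaurent_mat2Val H hab]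
  convert this using 1
  simp only [g, zpow_zero, one_smul, add_zero, sub_zero, neg_sub,
    neg_one_zpow_eq_of_two_dvd_sub (show (2 : ℤ) ∣ b - 2 - b by omega),
    show a + (b - 2) = a + b - 2 by ring, show b - (b - 2) = 2 by ring]

theorem sub_ofLaurent_toLaurent_mem (x : S) :
    x - H.ofLaurent (H.toLaurent x) ∈ H.lamIdeal := by
  induction x using H.induction_on with
  | e A hA =>
    rw [toLaurent_e]
    by_cases hr : rowS A = nu0
    · by_cases hc : colS A = nu0
      · obtain ⟨a, b, rfl⟩ := eq_mat2_one_two_of_rowS_eq_nu0 hA hr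
        rw [matVal_mat2]
        exact H.e_mat2_sub_ofLaurent_mem ((colS_mat2_eq_nu0_iff 1 a 2 b).mp hc)
      · rw [matVal_eq_zero_of_colS_ne hc, map_zero, sub_zero]
        exact H.e_mem_lamIdeal_of_colS_ne hA hc
    · rw [matVal_eq_zero_of_rowS_ne hr, map_zero, sub_zero]
      exact H.e_mem_lamIdeal_of_rowS_ne hA hr
  | zero => simp
  | add x y hx hy => simpa only [map_add, add_sub_add_comm] using H.lamIdeal.add_mem hx hy
  | smul c x hx => simpa only [map_smul, smul_sub] using H.lamIdeal.smul_mem c hx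

theorem toLaurent_e_diagM_mul_eq_zero {w : ℤ → ℕ} (hw : w ∈ LambdaAff 2 2) (hne : w ≠ nu0)
    (z : S) : H.toLaurent (H.e (diagM w) * z) = 0 := by
  induction z using H.induction_on with
  | zero => simp
  | add x y hx hy => simp [mul_add, hx, hy]
  | smul c x hx => simp [hx]
  | e B hB =>
    by_cases hBw : rowS B = w
    · rw [← hBw, H.diag_row B hB, toLaurent_e, matVal_eq_zero_of_rowS_ne (hBw ▸ hne)]
    · rw [H.mul_disjoint _ _ (diagM_mem_thetaAff hw) hB (by rwa [colS_diagM, ne_comm]), map_zero]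

theorem toLaurent_mul_e_diagM_eq_zero {w : ℤ → ℕ} (hw : w ∈ LambdaAff 2 2) (hne : w ≠ nu0)
    (z : S) : H.toLaurent (z * H.e (diagM w)) = 0 := by
  induction z using H.induction_on with
  | zero => simp
  | add x y hx hy => simp [add_mul, hx, hy]
  | smul c x hx => simp [hx]
  | e B hB =>
    by_cases hBw : colS B = w
    · rw [← hBw, H.diag_col B hB, toLaurent_e, matVal_eq_zero_of_colS_ne (hBw ▸ hne)]
    · rw [H.mul_disjoint _ _ hB (diagM_mem_thetaAff hw) (by rwa [rowS_diagM]), map_zero]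

theorem toLaurent_e_mat2_mul_e_mat2 {a b c d : ℤ} (hab : ¬ (2 : ℤ) ∣ a + b)
    (hcd : ¬ (2 : ℤ) ∣ c + d) :
    H.toLaurent (H.e (Mat2 1 a 2 b) * H.e (Mat2 1 c 2 d)) = mat2Val a b * mat2Val c d := by
  by_cases ha : (2 : ℤ) ∣ a - 1
  · rw [H.e_mul_e_of_two_dvd_sub_one ha (by omega), toLaurent_e, matVal_mat2,
      mat2Val_mul_of_two_dvd_sub_one ha hab hcd]
  · rw [H.e_mul_e_of_two_dvd (by omega) (by omega) (by omega : c ≠ d), toLaurent_e, matVal_mat2,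
      mat2Val_mul_of_two_dvd (by omega) hab hcd]

theorem toLaurent_e_mul_e_eq_zero {A B : ℤ → ℤ → ℕ} (hA : A ∈ ThetaAff 2 2)
    (hB : B ∈ ThetaAff 2 2) (hAc : colS A = lam0) (hBr : rowS B = lam0) :
    H.toLaurent (H.e A * H.e B) = 0 := by
  obtain hAr | hAr := ne_or_eq (rowS A) nu0
  · rw [← H.diag_row A hA, mul_assoc]
    exact H.toLaurent_e_diagM_mul_eq_zero (ThetaAff.rowS_mem hA) hAr _
  obtain hBc | hBc := ne_or_eq (colS B) nu0
  · rw [← H.diag_col B hB, ← mul_assoc]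
    exact H.toLaurent_mul_e_diagM_eq_zero (ThetaAff.colS_mem hB) hBc _
  obtain ⟨a, b, rfl⟩ := eq_mat2_one_two_of_rowS_eq_nu0 hA hAr
  obtain ⟨c, d, rfl⟩ := eq_mat2_one_one_of_rowS_eq_lam0 hB hBr
  obtain ⟨ha, hb⟩ := (colS_mat2_eq_lam0_iff 1 a 2 b).mp hAc
  have hcd := (colS_mat2_eq_nu0_iff 1 c 1 d).mp hBc
  rw [← H.e_raise_mul_e (show c ≠ d by omega), ← mul_assoc, H.e_mul_e_raise ha hb, add_mul,
    map_add, H.toLaurent_e_mat2_mul_e_mat2 (by omega) hcd,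
    H.toLaurent_e_mat2_mul_e_mat2 (by omega) hcd, ← add_mul,
    mat2Val_add_one_add_mat2Val_add_one, zero_mul]

theorem toLaurent_mul_e_diagM_lam0_mul_eq_zero (x y : S) :
    H.toLaurent (x * H.e (diagM lam0) * y) = 0 := by
  have hlam := diagM_mem_thetaAff lam0_mem_lambdaAff
  induction x using H.induction_on with
  | zero => simp
  | add x x' hx hx' => simp [add_mul, hx, hx']
  | smul c x hx => simp [hx]
  | e A hA =>
    induction y using H.induction_on with
    | zero => simp
    | add y y' hy hy' => simp [mul_add, hy, hy']
    | smul c y hy => simp [hy]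
    | e B hB =>
      by_cases hAc : colS A = lam0
      · by_cases hBr : rowS B = lam0
        · rw [← hAc, H.diag_col A hA, H.toLaurent_e_mul_e_eq_zero hA hB hAc hBr]
        · rw [mul_assoc, H.mul_disjoint _ _ hlam hB (by rwa [colS_diagM, ne_comm]), mul_zero,
            map_zero]
      · rw [H.mul_disjoint _ _ hA hlam (by rwa [rowS_diagM]), zero_mul, map_zero]

theorem toLaurent_eq_zero_of_mem {z : S} (hz : z ∈ H.lamIdeal) : H.toLaurent z = 0 := by
  induction hz using Submodule.span_induction with
  | mem y hy =>
    obtain ⟨x, y, rfl⟩ := hy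
    exact H.toLaurent_mul_e_diagM_lam0_mul_eq_zero x y
  | zero => exact map_zero _
  | add y z _ _ hy hz => rw [map_add, hy, hz, add_zero]
  | smul c y _ hy => rw [map_smul, hy, smul_zero]

theorem toLaurent_eq_zero_iff (x : S) : H.toLaurent x = 0 ↔ x ∈ H.lamIdeal :=
  ⟨fun hx => by simpa [hx] using H.sub_ofLaurent_toLaurent_mem x, H.toLaurent_eq_zero_of_mem⟩

theorem toLaurent_mul (x y : S) : H.toLaurent (x * y) = H.toLaurent x * H.toLaurent y := by
  have hx := H.sub_ofLaurent_toLaurent_mem x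
  have hy := H.sub_ofLaurent_toLaurent_mem y
  have hxy : x * y - H.ofLaurent (H.toLaurent x) * H.ofLaurent (H.toLaurent y) ∈ H.lamIdeal := by
    rw [show x * y - H.ofLaurent (H.toLaurent x) * H.ofLaurent (H.toLaurent y)
        = (x - H.ofLaurent (H.toLaurent x)) * y
          + H.ofLaurent (H.toLaurent x) * (y - H.ofLaurent (H.toLaurent y)) by noncomm_ring]
    exact add_mem (H.mul_mem_lamIdeal_right hx y) (H.mul_mem_lamIdeal_left _ hy)
  rw [← sub_eq_zero, ← toLaurent_ofLaurent H (_ * _), ofLaurent_mul, ← map_sub]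
  exact H.toLaurent_eq_zero_of_mem hxy

theorem toLaurent_one : H.toLaurent 1 = 1 := by
  simpa [toLaurent_ofLaurent] using (H.toLaurent_mul 1 (H.ofLaurent 1)).symm

def toLaurentAlgHom : S →ₐ[ℚ] LaurentPolynomial ℚ :=
  AlgHom.ofLinearMap H.toLaurent H.toLaurent_one H.toLaurent_mul

end AffineSchur22

end

/-- Lemma 4.1 of the paper. In `S△(2,2)` over `ℚ` at `q = 1` with
`λ = (2,0)`, the quotient of `S△(2,2)` by the two-sided ideal generated by `e_λ` is
isomorphic as a `ℚ`-algebra to the Laurent polynomial ring `ℚ[x, x⁻¹]` (presented by a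
surjective `ℚ`-algebra map whose kernel is that ideal). -/
theorem schur_quotient_iso_laurent (S : Type) [Ring S] [Algebra ℚ S]
    (H : AffineSchur22 S) :
    ∃ π : S →ₐ[ℚ] LaurentPolynomial ℚ,
      Function.Surjective π ∧
      ∀ x : S, π x = 0 ↔
        x ∈ Submodule.span ℚ {y : S | ∃ a b : S, y = a * H.e (diagM lam0) * b} :=
  ⟨H.toLaurentAlgHom, fun p => ⟨H.ofLaurent p, H.toLaurent_ofLaurent p⟩, H.toLaurent_eq_zero_iff⟩
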